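/- In the same setting (p_vol(x|θ,γ) = f(d(x,θ)², γ) on a Riemannian homogeneous space M), the Fisher information matrix with respect to γ is independent of θ: for all ν₁, ν₂ ∈ M, I_γ(ν₁, γ) = I_γ(ν₂, γ). -/

import Mathlib

open MeasureTheory

/-! An isometry `g` with `g ν₁ = ν₂` carries `x ↦ φ (d(x, ν₂))` back to `x ↦ φ (d(x, ν₁))`, so if
it also preserves the measure, the change of variables `x ↦ g x` identifies the two integrals.
Transitivity applied in the opposite direction shows that both integrands are a.e. strongly
measurable or neither is, so the identity also holds when Bochner's integral takes its junk
value `0`. -/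

theorem MeasureTheory.MeasurePreserving.integral_comp_of_aestronglyMeasurable
    {α β E : Type*} [MeasurableSpace α] [MeasurableSpace β] [NormedAddCommGroup E]
    [NormedSpace ℝ E] {μ : Measure α} {ν : Measure β} {g : α → β}
    (hg : MeasurePreserving g μ ν) {f : β → E} (hf : AEStronglyMeasurable f ν) :
    ∫ x, f (g x) ∂μ = ∫ y, f y ∂ν := by
  rw [← integral_map hg.measurable.aemeasurable (hg.map_eq ▸ hf), hg.map_eq]

theorem Isometry.comp_dist_comp {M α : Type*} [PseudoMetricSpace M] {g : M → M}
    (hg : Isometry g) {a b : M} (hab : g a = b) (φ : ℝ → α) :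
    (fun x => φ (dist x b)) ∘ g = fun x => φ (dist x a) := by
  funext x
  simp only [Function.comp, ← hab, hg.dist_eq]

section DistanceProfile

variable {M E : Type*} [PseudoMetricSpace M] [MeasurableSpace M] {μ : Measure M}

theorem MeasureTheory.AEStronglyMeasurable.comp_dist_of_transitive [TopologicalSpace E]
    (hom : ∀ a b : M, ∃ g : M → M, Isometry g ∧ MeasurePreserving g μ μ ∧ g a = b)
    {φ : ℝ → E} {a : M} (h : AEStronglyMeasurable (fun x => φ (dist x a)) μ) (b : M) :
    AEStronglyMeasurable (fun x => φ (dist x b)) μ := by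
  obtain ⟨g, hg, hmp, hba⟩ := hom b a
  rw [← hg.comp_dist_comp hba φ]
  exact h.comp_measurePreserving hmp

theorem integral_comp_dist_eq_of_transitive [NormedAddCommGroup E] [NormedSpace ℝ E]
    (hom : ∀ a b : M, ∃ g : M → M, Isometry g ∧ MeasurePreserving g μ μ ∧ g a = b)
    (φ : ℝ → E) (a b : M) :
    ∫ x, φ (dist x a) ∂μ = ∫ x, φ (dist x b) ∂μ := by
  by_cases hb : AEStronglyMeasurable (fun x => φ (dist x b)) μ
  · obtain ⟨g, hg, hmp, hab⟩ := hom a b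
    calc ∫ x, φ (dist x a) ∂μ = ∫ x, φ (dist (g x) b) ∂μ := by
          rw [← hg.comp_dist_comp hab φ]; rfl
      _ = ∫ y, φ (dist y b) ∂μ := hmp.integral_comp_of_aestronglyMeasurable hb
  · have ha : ¬ AEStronglyMeasurable (fun x => φ (dist x a)) μ :=
      fun ha => hb (ha.comp_dist_of_transitive hom b)
    rw [integral_non_aestronglyMeasurable ha, integral_non_aestronglyMeasurable hb]

end DistanceProfile

theorem fisher_gamma_independent_of_location_general
    {M : Type*} [MetricSpace M] [MeasurableSpace M] (vol : Measure M)
    {m : ℕ} (f : ℝ → (Fin m → ℝ) → ℝ)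
    (H : ℝ → (Fin m → ℝ) → Matrix (Fin m) (Fin m) ℝ)
    (hom : ∀ ν₁ ν₂ : M, ∃ g : M → M,
      Isometry g ∧ MeasurePreserving g vol vol ∧ g ν₁ = ν₂)
    (γ : Fin m → ℝ) :
    ∀ (ν₁ ν₂ : M) (i j : Fin m),
      ∫ x, H (dist x ν₁ ^ 2) γ i j * f (dist x ν₁ ^ 2) γ ∂vol
        = ∫ x, H (dist x ν₂ ^ 2) γ i j * f (dist x ν₂ ^ 2) γ ∂vol :=
  fun ν₁ ν₂ i j =>
    integral_comp_dist_eq_of_transitive hom (fun s => H (s ^ 2) γ i j * f (s ^ 2) γ) ν₁ ν₂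

theorem fisher_gamma_independent_of_location
    {M : Type*} [MetricSpace M] [MeasurableSpace M] (vol : Measure M)
    {m : ℕ} (f : ℝ → (Fin m → ℝ) → ℝ)
    (H : ℝ → (Fin m → ℝ) → Matrix (Fin m) (Fin m) ℝ)
    (hH : ∀ (s : ℝ) (γ : Fin m → ℝ) (i j : Fin m),
      H s γ i j =
        - deriv (fun a =>
            deriv (fun b =>
                Real.log (f s (Function.update (Function.update γ i a) j b)))
              ((Function.update γ i a) j)) (γ i))
    (hom : ∀ ν₁ ν₂ : M, ∃ g : M → M,
      Isometry g ∧ MeasurePreserving g vol vol ∧ g ν₁ = ν₂)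
    (γ : Fin m → ℝ) :
    ∀ (ν₁ ν₂ : M) (i j : Fin m),
      ∫ x, H (dist x ν₁ ^ 2) γ i j * f (dist x ν₁ ^ 2) γ ∂vol
        = ∫ x, H (dist x ν₂ ^ 2) γ i j * f (dist x ν₂ ^ 2) γ ∂vol :=
  fisher_gamma_independent_of_location_general vol f H hom γ
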